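/- arXiv:2407.10509 — 9 statements merged into one kernel-verified Lean document; each statement's English description precedes it below -/
import Mathlib

section
/- Let X = ℓ², P = {x ∈ ℓ² : n·x₁ ≥ |xₙ| for all n ≥ 2}, and K = (−P) ∩ B_X where B_X is the closed unit ball. Then 0 is a maximal element of K with respect to P, i.e. K ∩ P = {0}. -/
theorem nonneg_of_forall_abs_le_mul {f : ℕ → ℝ} (hf : ∀ i, 1 ≤ i → |f i| ≤ ((i : ℝ) + 1) * f 0) :
    0 ≤ f 0 := by
  simpa using (abs_nonneg (f 1)).trans (hf 1 le_rfl)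

theorem eq_zero_of_forall_abs_le_mul_of_neg {f : ℕ → ℝ}
    (hf : ∀ i, 1 ≤ i → |f i| ≤ ((i : ℝ) + 1) * f 0)
    (hnf : ∀ i, 1 ≤ i → |(-f) i| ≤ ((i : ℝ) + 1) * (-f) 0) : f = 0 := by
  have h0 : f 0 = 0 :=
    le_antisymm (neg_nonneg.mp (nonneg_of_forall_abs_le_mul hnf)) (nonneg_of_forall_abs_le_mul hf)
  funext i
  rcases Nat.eq_zero_or_pos i with rfl | hi
  · exact h0
  · simpa [h0] using hf i hi

-- Paper coordinate `n` is Lean index `n - 1`, so `x 0` is the paper's `x₁`.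
/-- In `X = ℓ²` (paper coordinate `n` is Lean index `n - 1`), with
`P = {x : n·x₁ ≥ |xₙ| for all n ≥ 2}` and `K = (−P) ∩ B_X`, the point `0` is a
`P`-maximal element of `K`, i.e. `K ∩ (0 + P) = K ∩ P = {0}`. -/
theorem stmt3 :
    let X := lp (fun _ : ℕ => ℝ) 2
    let P : Set X := {x | ∀ i : ℕ, 1 ≤ i → |x i| ≤ ((i : ℝ) + 1) * x 0}
    let K : Set X := (-P) ∩ Metric.closedBall 0 1
    K ∩ P = {0} := by
  intro X P K
  ext x
  constructor
  · rintro ⟨⟨hneg, -⟩, hpos⟩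
    have hx : ⇑x = 0 := eq_zero_of_forall_abs_le_mul_of_neg hpos hneg
    exact lp.ext hx
  · rintro rfl
    exact ⟨⟨fun i _ => by simp, by simp⟩, fun i _ => by simp⟩
end

section
/- Let X = ℓ², P = {x ∈ ℓ² : n·x₁ ≥ |xₙ| for all n ≥ 2}, and K = (−P) ∩ B_X. Then the set of P-maximal elements of K equals {0}, i.e., every x ∈ K with x ≠ 0 satisfies (x + P) ∩ K ≠ {x}. -/
open scoped Pointwise

/-! Since `K ⊆ -P` and `P` is a cone, for `x ∈ K \ {0}` the point `x / 2 = x + (-x / 2)` lies in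
`K ∩ (x + P)` and differs from `x`. At `x = 0` we get `K ∩ P ⊆ P ∩ -P = {0}`, because `P` is
pointed: `|x₂| ≤ 2 x₁` forces `x₁ ≥ 0` on `P`. -/

open Metric Set

section Cone

variable {E : Type*} [SeminormedAddCommGroup E] {C : Set E} {r : ℝ} {x : E}

lemma half_smul_mem_inter_singleton_add [NormedSpace ℝ E] (hC : ∀ c : ℝ, 0 < c → ∀ y ∈ C, c • y ∈ C)
    (hx : x ∈ -C ∩ closedBall 0 r) :
    (2⁻¹ : ℝ) • x ∈ (-C ∩ closedBall 0 r) ∩ ({x} + C) := by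
  obtain ⟨hxC, hxr⟩ := hx
  have hhalf : (2⁻¹ : ℝ) • -x ∈ C := hC _ (by norm_num) _ hxC
  refine ⟨⟨by rwa [mem_neg, ← smul_neg], ?_⟩, ?_⟩
  · rw [mem_closedBall_zero_iff] at hxr ⊢
    rw [norm_smul, Real.norm_of_nonneg (by norm_num)]
    linarith [norm_nonneg x]
  · have hsum : x + (2⁻¹ : ℝ) • -x = (2⁻¹ : ℝ) • x := by module
    exact hsum ▸ add_mem_add rfl hhalf

lemma inter_singleton_add_ne_singleton [NormedSpace ℝ E] (hC : ∀ c : ℝ, 0 < c → ∀ y ∈ C, c • y ∈ C)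
    (hx : x ∈ -C ∩ closedBall 0 r) (hx0 : x ≠ 0) :
    (-C ∩ closedBall 0 r) ∩ ({x} + C) ≠ {x} := by
  intro h
  have hmem := half_smul_mem_inter_singleton_add hC hx
  rw [h, mem_singleton_iff] at hmem
  have : ((2⁻¹ : ℝ) - 1) • x = 0 := by rw [sub_smul, one_smul, hmem, sub_self]
  exact hx0 ((smul_eq_zero.mp this).resolve_left (by norm_num))

lemma inter_singleton_zero_add_eq (hC0 : (0 : E) ∈ C) (hCpointed : ∀ y ∈ C, -y ∈ C → y = 0)
    (hr : 0 ≤ r) :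
    (-C ∩ closedBall 0 r) ∩ ({0} + C) = {0} := by
  simp only [singleton_add, zero_add, image_id']
  ext y
  simp only [mem_inter_iff, mem_neg, mem_singleton_iff]
  constructor
  · rintro ⟨⟨hy_neg, -⟩, hy⟩
    exact hCpointed y hy hy_neg
  · rintro rfl
    exact ⟨⟨by rwa [neg_zero], mem_closedBall_self hr⟩, hC0⟩

lemma setOf_inter_singleton_add_eq_singleton [NormedSpace ℝ E] (hC : ∀ c : ℝ, 0 < c → ∀ y ∈ C, c • y ∈ C)
    (hC0 : (0 : E) ∈ C) (hCpointed : ∀ y ∈ C, -y ∈ C → y = 0) (hr : 0 ≤ r) :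
    {x ∈ -C ∩ closedBall 0 r | (-C ∩ closedBall 0 r) ∩ ({x} + C) = {x}} = {0} := by
  ext x
  simp only [mem_ofPred_eq, mem_singleton_iff]
  constructor
  · rintro ⟨hx, hmax⟩
    by_contra hx0
    exact inter_singleton_add_ne_singleton hC hx hx0 hmax
  · rintro rfl
    exact ⟨⟨by rwa [mem_neg, neg_zero], mem_closedBall_self hr⟩,
      inter_singleton_zero_add_eq hC0 hCpointed hr⟩

end Cone

section WeightedCone

variable {p : ENNReal}

def weightedCone (p : ENNReal) : Set (lp (fun _ : ℕ => ℝ) p) :=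
  {x | ∀ i : ℕ, 1 ≤ i → |x i| ≤ ((i : ℝ) + 1) * x 0}

lemma smul_mem_weightedCone {c : ℝ} (hc : 0 < c) {x : lp (fun _ : ℕ => ℝ) p}
    (hx : x ∈ weightedCone p) : c • x ∈ weightedCone p := by
  intro i hi
  simp only [lp.coeFn_smul, Pi.smul_apply, smul_eq_mul, abs_mul, abs_of_pos hc]
  calc c * |x i| ≤ c * (((i : ℝ) + 1) * x 0) := mul_le_mul_of_nonneg_left (hx i hi) hc.le
    _ = ((i : ℝ) + 1) * (c * x 0) := by ring

lemma zero_mem_weightedCone : (0 : lp (fun _ : ℕ => ℝ) p) ∈ weightedCone p := by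
  intro i _
  simp

lemma eq_zero_of_mem_weightedCone_of_neg_mem {x : lp (fun _ : ℕ => ℝ) p}
    (hx : x ∈ weightedCone p) (hnx : -x ∈ weightedCone p) : x = 0 := by
  have hbound : ∀ i, 1 ≤ i → |x i| ≤ ((i : ℝ) + 1) * -x 0 := by
    simpa [weightedCone] using hnx
  have hx0 : x 0 = 0 := by
    have h₁ := hx 1 le_rfl
    have h₂ := hbound 1 le_rfl
    norm_num at h₁ h₂
    linarith [abs_nonneg (x 1)]
  ext i
  rcases Nat.eq_zero_or_pos i with rfl | hi
  · simpa using hx0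
  · simpa [hx0] using hx i hi

end WeightedCone

/-- In `X = ℓ²` (paper coordinate `n` is Lean index `n - 1`), with
`P = {x : n·x₁ ≥ |xₙ| for all n ≥ 2}` and `K = (−P) ∩ B_X`, the set of `P`-maximal
elements of `K` equals `{0}`: every `x ∈ K`, `x ≠ 0` satisfies `K ∩ (x + P) ≠ {x}`. -/
theorem stmt4 :
    let X := lp (fun _ : ℕ => ℝ) 2
    let P : Set X := {x | ∀ i : ℕ, 1 ≤ i → |x i| ≤ ((i : ℝ) + 1) * x 0}
    let K : Set X := (-P) ∩ Metric.closedBall 0 1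
    ({x ∈ K | K ∩ (({x} : Set X) + P) = {x}} = {0}) ∧
      ∀ x ∈ K, x ≠ 0 → K ∩ (({x} : Set X) + P) ≠ {x} := by
  intro X P K
  have hP : ∀ c : ℝ, 0 < c → ∀ y ∈ P, c • y ∈ P := fun c hc y hy => smul_mem_weightedCone hc hy
  exact ⟨setOf_inter_singleton_add_eq_singleton hP zero_mem_weightedCone
      (fun y hy hny => eq_zero_of_mem_weightedCone_of_neg_mem hy hny) zero_le_one,
    fun x hx hx0 => inter_singleton_add_ne_singleton hP hx hx0⟩
end

section
/- Let X = ℓ², P = {x ∈ ℓ² : n·x₁ ≥ |xₙ| for all n ≥ 2}, and K = (−P) ∩ B_X. Then the coordinate functional e₁*(x) = x₁ is strictly positive on P \ {0} and satisfies sup e₁*(K) = 0 = e₁*(0); hence 0 ∈ Pos(K, P). -/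
section WeightedCone

variable {f : ℕ → ℝ} {c : ℕ → ℝ}

theorem nonneg_apply_zero_of_abs_le_mul (hc : 0 < c 1)
    (h : ∀ i, 1 ≤ i → |f i| ≤ c i * f 0) : 0 ≤ f 0 :=
  nonneg_of_mul_nonneg_right ((abs_nonneg _).trans (h 1 le_rfl)) hc

theorem eq_zero_of_abs_le_mul_apply_zero (h : ∀ i, 1 ≤ i → |f i| ≤ c i * f 0)
    (h0 : f 0 = 0) : f = 0 := by
  funext i
  rcases Nat.eq_zero_or_pos i with rfl | hi
  · exact h0
  · simpa [h0] using h i hi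

end WeightedCone

/-- Paper coordinate `n` is Lean index `n - 1`. -/
theorem stmt5 :
    let X := lp (fun _ : ℕ => ℝ) 2
    let P : Set X := {x | ∀ i : ℕ, 1 ≤ i → |x i| ≤ ((i : ℝ) + 1) * x 0}
    let K : Set X := (-P) ∩ Metric.closedBall 0 1
    (∀ x ∈ P, x ≠ 0 → 0 < x 0) ∧
      (0 : X) ∈ K ∧ IsGreatest ((fun x : X => x 0) '' K) 0 := by
  intro X P K
  have nonneg : ∀ x ∈ P, 0 ≤ x 0 := fun x hx =>
    nonneg_apply_zero_of_abs_le_mul (c := fun i : ℕ => (i : ℝ) + 1) (by norm_num) hx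
  have zero_mem_K : (0 : X) ∈ K := ⟨fun i _ => by simp, by simp⟩
  refine ⟨fun x hx hne => (nonneg x hx).lt_of_ne' fun h0 => hne ?_, zero_mem_K,
    ⟨0, zero_mem_K, by simp⟩, ?_⟩
  · exact lp.ext (eq_zero_of_abs_le_mul_apply_zero hx h0)
  · rintro _ ⟨x, ⟨hx, -⟩, rfl⟩
    simpa using nonneg (-x) hx
end

section
/- Let X = ℓ¹, P = ℓ¹₊, f = (1/n)_{n≥1}, and K = {x ∈ ℓ¹ : −1 ≤ f(x) ≤ 0} ∩ 2B_X. Then 0 is not strictly maximal for (K,P): the points xⁿ = eₙ − (1/n)e₁ satisfy xⁿ ∈ K, xⁿ ∈ P + (1/n)B_X (for n ≥ 2), and ‖xⁿ‖₁ ≥ 1. -/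
/-!
Each `xⁿ = eₙ − (1/n)e₁` is killed by `f`, has norm between `1` and `1 + 1/n`, and lies within
`1/n` of the positive cone (drop its `−(1/n)e₁` part). So for every `δ > 0` the set
`(P + δB_X) ∩ K` contains points of norm `≥ 1`.
-/

open scoped Pointwise ENNReal
open Metric

section StrictMaximality

variable {E : Type*} [SeminormedAddCommGroup E] {P K : Set E}

theorem not_forall_inter_subset_closedBall_of_one_le_norm (x : ℕ → E)
    (hx : ∀ n : ℕ, 2 ≤ n → x n ∈ K ∧ x n ∈ P + closedBall (0 : E) (1 / (n : ℝ)) ∧ 1 ≤ ‖x n‖) :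
    ¬ ∀ ε > (0 : ℝ), ∃ δ > (0 : ℝ), (P + closedBall (0 : E) δ) ∩ K ⊆ closedBall (0 : E) ε := by
  intro h
  obtain ⟨δ, hδ, hsub⟩ := h (1 / 2) (by norm_num)
  obtain ⟨m, hm⟩ := exists_nat_one_div_lt hδ
  obtain ⟨hK, hP, hnorm⟩ := hx (m + 2) (by omega)
  have hle : 1 / ((m + 2 : ℕ) : ℝ) ≤ δ := by
    refine le_trans ?_ hm.le
    gcongr
    push_cast
    linarith
  have := hsub ⟨Set.add_subset_add_left (closedBall_subset_closedBall hle) hP, hK⟩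
  rw [mem_closedBall, dist_zero_right] at this
  linarith

end StrictMaximality

namespace lp

variable {p : ℝ≥0∞}

local notation "e" i:max => lp.single (E := fun _ : ℕ => ℝ) p i (1 : ℝ)

theorem coeFn_single_sub_smul_single (i j : ℕ) (c : ℝ) :
    ⇑(e i - c • e j) = Pi.single i 1 - c • Pi.single j 1 := rfl

theorem hasSum_single_sub_smul_single_div_succ (i j : ℕ) (c : ℝ) :
    HasSum (fun k : ℕ => (e i - c • e j) k / ((k : ℝ) + 1))
      (1 / ((i : ℝ) + 1) - c * (1 / ((j : ℝ) + 1))) := by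
  have hone (l : ℕ) :
      HasSum (fun k : ℕ => (Pi.single l 1 : ℕ → ℝ) k / ((k : ℝ) + 1)) (1 / ((l : ℝ) + 1)) := by
    simpa using hasSum_single (f := fun k : ℕ => (Pi.single l 1 : ℕ → ℝ) k / ((k : ℝ) + 1)) l
      fun k hk => by rw [Pi.single_eq_of_ne hk, zero_div]
  have hfun : (fun k : ℕ => (e i - c • e j) k / ((k : ℝ) + 1)) = fun k =>
      (Pi.single i 1 : ℕ → ℝ) k / ((k : ℝ) + 1) - c * ((Pi.single j 1 : ℕ → ℝ) k / ((k : ℝ) + 1)) := by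
    funext k
    rw [coeFn_single_sub_smul_single, Pi.sub_apply, Pi.smul_apply, smul_eq_mul]
    ring
  rw [hfun]
  exact (hone i).sub ((hone j).mul_left c)

variable [Fact (1 ≤ p)]

theorem norm_single_one (i : ℕ) : ‖e i‖ = 1 := by
  rw [lp.norm_single (zero_lt_one.trans_le Fact.out), norm_one]

theorem norm_single_sub_smul_single_le (i j : ℕ) (c : ℝ) : ‖e i - c • e j‖ ≤ 1 + |c| :=
  calc ‖e i - c • e j‖ ≤ ‖e i‖ + ‖c • e j‖ := norm_sub_le _ _
    _ = 1 + |c| := by rw [norm_smul, norm_single_one, norm_single_one, Real.norm_eq_abs, mul_one]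

theorem one_le_norm_single_sub_smul_single {i j : ℕ} (hij : i ≠ j) (c : ℝ) :
    1 ≤ ‖e i - c • e j‖ := by
  have := lp.norm_apply_le_norm (zero_lt_one.trans_le Fact.out).ne' (e i - c • e j) i
  rw [coeFn_single_sub_smul_single] at this
  simpa [hij] using this

theorem single_sub_smul_single_mem_add_closedBall (i j : ℕ) (c : ℝ) :
    e i - c • e j ∈ {x : lp (fun _ : ℕ => ℝ) p | ∀ k, 0 ≤ x k} + closedBall 0 |c| := by
  refine ⟨e i, fun k => ?_, -(c • e j), ?_, (sub_eq_add_neg _ _).symm⟩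
  · rw [lp.single_apply, Pi.single_apply]
    split_ifs <;> norm_num
  · rw [mem_closedBall, dist_zero_right, norm_neg, norm_smul, norm_single_one, Real.norm_eq_abs,
      mul_one]

end lp

/-- In `X = ℓ¹` (paper coordinate `n` is Lean index `n - 1`), with `P = ℓ¹₊`,
`f(x) = Σₙ xₙ/n`, `K = {x : −1 ≤ f(x) ≤ 0} ∩ 2B_X`: the points `xⁿ = eₙ − (1/n)e₁`
satisfy `xⁿ ∈ K`, `xⁿ ∈ P + (1/n)B_X` and `‖xⁿ‖₁ ≥ 1` for `n ≥ 2`; consequently `0`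
is not strictly maximal for `(K, P)`. -/
theorem stmt9 :
    let X := lp (fun _ : ℕ => ℝ) 1
    let P : Set X := {x | ∀ i : ℕ, 0 ≤ x i}
    let f : X → ℝ := fun x => ∑' i : ℕ, x i / ((i : ℝ) + 1)
    let K : Set X := {x | -1 ≤ f x ∧ f x ≤ 0} ∩ Metric.closedBall 0 2
    let e : ℕ → X := fun i => lp.single 1 i (1 : ℝ)
    let xseq : ℕ → X := fun n => e (n - 1) - (1 / (n : ℝ)) • e 0
    (∀ n : ℕ, 2 ≤ n →
        xseq n ∈ K ∧ xseq n ∈ P + Metric.closedBall (0 : X) (1 / (n : ℝ)) ∧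
          1 ≤ ‖xseq n‖) ∧
      ¬ (∀ ε > (0 : ℝ), ∃ δ > (0 : ℝ),
          (P + Metric.closedBall (0 : X) δ) ∩ K ⊆ Metric.closedBall (0 : X) ε) := by
  intro X P f K e xseq
  have hxseq : ∀ n : ℕ, 2 ≤ n →
      xseq n ∈ K ∧ xseq n ∈ P + closedBall (0 : X) (1 / (n : ℝ)) ∧ 1 ≤ ‖xseq n‖ := by
    intro n hn
    have hn_pos : (0 : ℝ) < n := by positivity
    have hf : f (xseq n) = 0 := by
      have hpred : ((n - 1 : ℕ) : ℝ) + 1 = n := by rw [Nat.cast_sub (by omega)]; ring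
      refine (lp.hasSum_single_sub_smul_single_div_succ (n - 1) 0 (1 / (n : ℝ))).tsum_eq.trans ?_
      rw [hpred]
      simp
    have hc : |1 / (n : ℝ)| = 1 / n := abs_of_pos (by positivity)
    have hnorm : ‖xseq n‖ ≤ 2 := by
      have hc_le : 1 / (n : ℝ) ≤ 1 := by rw [div_le_one hn_pos]; exact_mod_cast (by omega : 1 ≤ n)
      have := lp.norm_single_sub_smul_single_le (p := 1) (n - 1) 0 (1 / (n : ℝ))
      linarith
    refine ⟨⟨⟨by rw [hf]; norm_num, hf.le⟩, by rwa [mem_closedBall, dist_zero_right]⟩, ?_,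
      lp.one_le_norm_single_sub_smul_single (by omega) _⟩
    exact hc ▸ lp.single_sub_smul_single_mem_add_closedBall (n - 1) 0 (1 / (n : ℝ))
  exact ⟨hxseq, not_forall_inter_subset_closedBall_of_one_le_norm xseq hxseq⟩
end

section
/- Let X = (c₀, |||·|||) where |||x||| = ‖x‖_∞ + ‖(xₙ/2ⁿ)ₙ‖₂, let K be the closed unit ball of |||·||| and P = (c₀)₊ the nonnegative cone. Then x̄ = (2/3)e₁ satisfies |||x̄||| = 1 and |||x̄ + p||| > 1 for every p ∈ P \ {0}; hence x̄ is a P-maximal element of K. -/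
/-!
On the nonnegative cone `P` the norm `|||·|||` is strictly monotone: the sup norm is monotone
there, and the weighted `ℓ²` part strictly increases as soon as one coordinate does. Since
`|||(2/3)e₁||| = 2/3 + 1/3 = 1`, every `x̄ + p` with `p ∈ P \ {0}` leaves the unit ball.
-/

open scoped ZeroAtInfty Pointwise

/-- The first standard unit vector `e₁ = (1,0,0,…)` as an element of `c₀`
(indexed by `ℕ` starting at `0`). -/
noncomputable def e₁c₀ : C₀(ℕ, ℝ) :=
  ⟨⟨fun n => if n = 0 then 1 else 0, continuous_of_discreteTopology⟩, by
    rw [cocompact_eq_atTop]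
    refine Filter.Tendsto.congr' ?_ tendsto_const_nhds
    filter_upwards [Filter.eventually_ge_atTop 1] with n hn
    simp [Nat.one_le_iff_ne_zero.mp hn]⟩

theorem e₁c₀_apply (n : ℕ) : e₁c₀ n = if n = 0 then 1 else 0 := rfl

namespace ZeroAtInftyContinuousMap

variable {α : Type*} [TopologicalSpace α]

theorem norm_apply_le {β : Type*} [SeminormedAddCommGroup β] (f : C₀(α, β)) (a : α) :
    ‖f a‖ ≤ ‖f‖ := by
  rw [← norm_toBCF_eq_norm]
  exact f.toBCF.norm_coe_le_norm a

theorem norm_le_of_forall_le {β : Type*} [SeminormedAddCommGroup β] {f : C₀(α, β)} {C : ℝ}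
    (hC : 0 ≤ C) (h : ∀ a, ‖f a‖ ≤ C) : ‖f‖ ≤ C := by
  rw [← norm_toBCF_eq_norm]
  exact (BoundedContinuousFunction.norm_le hC).2 h

theorem norm_le_norm_of_nonneg_of_le {f g : C₀(α, ℝ)} (hf : ∀ a, 0 ≤ f a) (hfg : ∀ a, f a ≤ g a) :
    ‖f‖ ≤ ‖g‖ :=
  norm_le_of_forall_le (norm_nonneg g) fun a => by
    rw [Real.norm_of_nonneg (hf a)]
    exact (hfg a).trans ((le_abs_self _).trans (g.norm_apply_le a))

end ZeroAtInftyContinuousMap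

theorem summable_sq_div_two_pow_succ {x : ℕ → ℝ} {C : ℝ} (hx : ∀ n, |x n| ≤ C) :
    Summable fun n => (x n / 2 ^ (n + 1)) ^ 2 := by
  refine ((summable_geometric_of_lt_one (by norm_num) (by norm_num : (1 / 4 : ℝ) < 1)).mul_left
    (C ^ 2)).of_nonneg_of_le (fun n => sq_nonneg _) fun n => ?_
  have hsq : x n ^ 2 ≤ C ^ 2 := sq_le_sq' (abs_le.1 (hx n)).1 (abs_le.1 (hx n)).2
  calc
    (x n / 2 ^ (n + 1)) ^ 2 = x n ^ 2 * (1 / 4) ^ n / 4 := by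
      rw [one_div, inv_pow, div_pow, ← pow_mul, show (4 : ℝ) = 2 ^ 2 by norm_num, ← pow_mul]
      ring
    _ ≤ C ^ 2 * (1 / 4) ^ n := by
      rw [div_le_iff₀ (by norm_num)]
      nlinarith [pow_pos (by norm_num : (0 : ℝ) < 1 / 4) n, sq_nonneg (x n)]

/-- The norm `|||·|||` of the statement; as `ℕ` starts at `0`, the `n`-th coordinate is weighted
by `2 ^ (n + 1)`. -/
noncomputable def tripleNorm (x : C₀(ℕ, ℝ)) : ℝ :=
  ‖x‖ + √(∑' n : ℕ, (x n / 2 ^ (n + 1)) ^ 2)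

theorem tripleNorm_lt_of_nonneg_of_le_of_ne {x y : C₀(ℕ, ℝ)} (hx : ∀ n, 0 ≤ x n)
    (hxy : ∀ n, x n ≤ y n) (hne : x ≠ y) : tripleNorm x < tripleNorm y := by
  obtain ⟨m, hm⟩ : ∃ m, x m ≠ y m := by
    by_contra! h
    exact hne (ZeroAtInftyContinuousMap.ext h)
  have hsq_le : ∀ n, (x n / 2 ^ (n + 1)) ^ 2 ≤ (y n / 2 ^ (n + 1)) ^ 2 := fun n => by
    gcongr
    · exact div_nonneg (hx n) (by positivity)
    · exact hxy n
  have hsq_lt : (x m / 2 ^ (m + 1)) ^ 2 < (y m / 2 ^ (m + 1)) ^ 2 := by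
    gcongr
    · exact div_nonneg (hx m) (by positivity)
    · exact (hxy m).lt_of_ne hm
  have hsum : ∑' n, (x n / 2 ^ (n + 1)) ^ 2 < ∑' n, (y n / 2 ^ (n + 1)) ^ 2 :=
    Summable.tsum_lt_tsum_of_nonneg (fun n => sq_nonneg _) hsq_le hsq_lt
      (summable_sq_div_two_pow_succ fun n => by simpa using y.norm_apply_le n)
  exact add_lt_add_of_le_of_lt (ZeroAtInftyContinuousMap.norm_le_norm_of_nonneg_of_le hx hxy)
    (Real.sqrt_lt_sqrt (tsum_nonneg fun n => sq_nonneg _) hsum)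

theorem norm_e₁c₀ : ‖e₁c₀‖ = 1 := by
  refine le_antisymm (ZeroAtInftyContinuousMap.norm_le_of_forall_le zero_le_one fun n => ?_) ?_
  · rw [e₁c₀_apply]
    split_ifs <;> simp
  · simpa [e₁c₀_apply] using e₁c₀.norm_apply_le 0

theorem tripleNorm_smul_e₁c₀ (c : ℝ) : tripleNorm (c • e₁c₀) = 3 / 2 * |c| := by
  have hsum : ∑' n : ℕ, ((c • e₁c₀) n / 2 ^ (n + 1)) ^ 2 = (|c| / 2) ^ 2 := by
    rw [tsum_eq_single 0 fun n hn => by simp [e₁c₀_apply, hn]]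
    simp [e₁c₀_apply, div_pow]
  rw [tripleNorm, hsum, Real.sqrt_sq (by positivity), norm_smul, norm_e₁c₀, Real.norm_eq_abs]
  ring

theorem sublevel_inter_singleton_add_eq_singleton {E β : Type*} [AddZeroClass E] [LinearOrder β]
    {f : E → β} {c : β} {P : Set E} {x : E} (hP : (0 : E) ∈ P) (hx : f x ≤ c)
    (hlt : ∀ p ∈ P, p ≠ 0 → c < f (x + p)) : {y | f y ≤ c} ∩ ({x} + P) = {x} := by
  ext y
  rw [Set.singleton_add]
  constructor
  · rintro ⟨hy, p, hp, rfl⟩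
    by_cases hp0 : p = 0
    · simp [hp0]
    · exact absurd hy (not_le.2 (hlt p hp hp0))
  · rintro rfl
    exact ⟨hx, 0, hP, add_zero _⟩

/-- In `X = (c₀, |||·|||)` with `|||x||| = ‖x‖∞ + ‖(xₙ/2ⁿ)ₙ‖₂`, `K` the closed unit
ball of `|||·|||` and `P = (c₀)₊`, the point `x̄ = (2/3)e₁` satisfies `|||x̄||| = 1`
and `|||x̄ + p||| > 1` for all `p ∈ P \ {0}`; hence `x̄` is `P`-maximal in `K`. -/
theorem stmt11 :
    let N : C₀(ℕ, ℝ) → ℝ := fun x => ‖x‖ + Real.sqrt (∑' n : ℕ, (x n / 2 ^ (n + 1)) ^ 2)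
    let K : Set C₀(ℕ, ℝ) := {x | N x ≤ 1}
    let P : Set C₀(ℕ, ℝ) := {x | ∀ n : ℕ, 0 ≤ x n}
    let xbar : C₀(ℕ, ℝ) := (2 / 3 : ℝ) • e₁c₀
    N xbar = 1 ∧ (∀ p ∈ P, p ≠ 0 → 1 < N (xbar + p)) ∧
      K ∩ (({xbar} : Set C₀(ℕ, ℝ)) + P) = {xbar} := by
  intro N K P xbar
  have hN : N xbar = 1 := by
    change tripleNorm _ = 1
    rw [tripleNorm_smul_e₁c₀]
    norm_num
  have hxbar : ∀ n, 0 ≤ xbar n := fun n => by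
    change 0 ≤ 2 / 3 * e₁c₀ n
    rw [e₁c₀_apply]
    split_ifs <;> norm_num
  have hlt : ∀ p ∈ P, p ≠ 0 → 1 < N (xbar + p) := fun p hp hp0 =>
    hN ▸ tripleNorm_lt_of_nonneg_of_le_of_ne hxbar (fun n => le_add_of_nonneg_right (hp n))
      (by simpa using hp0)
  exact ⟨hN, hlt, sublevel_inter_singleton_add_eq_singleton (fun _ => le_rfl) hN.le hlt⟩
end

section
/- Let X = ℓ², P = ℓ²₊, and K = {x ∈ ℓ² : x₁ + xₙ² ≤ 0 for all n ≥ 2}. Then K is convex, closed, and K ∩ {x : x₁ ≥ 0} = {0}; in particular 0 is a P-maximal element of K. -/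
/-!
`K` is the intersection, over `n ≥ 2`, of sublevel sets of the continuous convex functions
`x ↦ x₁ + xₙ²`, hence closed and convex. If moreover `x₁ ≥ 0`, then `xₙ² ≤ -x₁ ≤ 0` for every
`n ≥ 2`, while `x₁ ≤ -x₂² ≤ 0`; so `x = 0`. Since `P ⊆ {x : x₁ ≥ 0}`, also `K ∩ P = {0}`.
In Lean the paper's coordinate `n` is the index `n - 1`.
-/

section AddSqNonpos

variable {E ι : Type*} [AddCommGroup E] [Module ℝ E] (f : E →ₗ[ℝ] ℝ) (g : ι → E →ₗ[ℝ] ℝ)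
  (s : Set ι)

theorem convex_setOf_forall_add_sq_nonpos : Convex ℝ {x | ∀ i ∈ s, f x + g i x ^ 2 ≤ 0} := by
  have hconv (i : ι) : ConvexOn ℝ Set.univ fun x => f x + g i x ^ 2 :=
    (f.convexOn convex_univ).add ((even_two.convexOn_pow (𝕜 := ℝ)).comp_linearMap (g i))
  simpa only [Set.ofPred_forall, Set.mem_univ, true_and] using
    convex_iInter₂ fun i (_ : i ∈ s) => (hconv i).convex_le 0

theorem isClosed_setOf_forall_add_sq_nonpos [TopologicalSpace E] (hf : Continuous f)
    (hg : ∀ i, Continuous (g i)) : IsClosed {x | ∀ i ∈ s, f x + g i x ^ 2 ≤ 0} := by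
  simpa only [Set.ofPred_forall] using
    isClosed_biInter fun i (_ : i ∈ s) => isClosed_le (by fun_prop) continuous_const

end AddSqNonpos

theorem eq_zero_of_forall_add_sq_nonpos {x : ℕ → ℝ} (hx : ∀ i, 1 ≤ i → x 0 + x i ^ 2 ≤ 0)
    (h0 : 0 ≤ x 0) : x = 0 := by
  have hx0 : x 0 = 0 := by nlinarith [hx 1 le_rfl, sq_nonneg (x 1)]
  funext i
  rcases Nat.eq_zero_or_pos i with rfl | hi
  · exact hx0
  · exact pow_eq_zero_iff two_ne_zero |>.mp (by nlinarith [hx i hi, sq_nonneg (x i)])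

/-- In `X = ℓ²` (paper coordinate `n` is Lean index `n - 1`) with `P = ℓ²₊` and
`K = {x : x₁ + xₙ² ≤ 0 for all n ≥ 2}`, the set `K` is convex and closed, and
`K ∩ {x : x₁ ≥ 0} = {0}`; in particular `0` is `P`-maximal: `K ∩ P = {0}`. -/
theorem stmt13 :
    let X := lp (fun _ : ℕ => ℝ) 2
    let P : Set X := {x | ∀ i : ℕ, 0 ≤ x i}
    let K : Set X := {x | ∀ i : ℕ, 1 ≤ i → x 0 + (x i) ^ 2 ≤ 0}
    Convex ℝ K ∧ IsClosed K ∧ (K ∩ {x | 0 ≤ x 0} = {0}) ∧ K ∩ P = {0} := by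
  intro X P K
  have hK0 : K ∩ {x | 0 ≤ x 0} = {0} := by
    ext x
    refine ⟨fun ⟨hxK, hx0⟩ => lp.ext (eq_zero_of_forall_add_sq_nonpos hxK hx0), ?_⟩
    rintro rfl
    simp [K]
  refine ⟨convex_setOf_forall_add_sq_nonpos (lp.evalₗ _ 2 0) (lp.evalₗ _ 2) (Set.Ici 1),
    isClosed_setOf_forall_add_sq_nonpos (lp.evalₗ _ 2 0) (lp.evalₗ _ 2) (Set.Ici 1)
      (lp.evalCLM ℝ _ 2 0).continuous fun i => (lp.evalCLM ℝ _ 2 i).continuous, hK0, ?_⟩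
  refine Set.Subset.antisymm (fun x hx => hK0 ▸ ⟨hx.1, hx.2 0⟩) ?_
  rintro x rfl
  exact ⟨(hK0.ge rfl).1, fun i => le_rfl⟩
end

section
/- Let X = ℓ², P = ℓ²₊, and K = {x ∈ ℓ² : x₁ + xₙ² ≤ 0 for all n ≥ 2}. Then 0 ∉ Pos(K, P): for every y = (yₙ) ∈ ℓ² with yₙ > 0 for all n, there exists x ∈ K with ⟨y, x⟩ > 0. (Take x = (−α, √α, 0, …) with α > 0 small.) -/
/-!
A strictly positive functional `y` pairs with `x = -a² e₀ + a e₁` to `a y₁ - a² y₀`, which is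
positive for small `a > 0`; and `x ∈ K` because `x₀ + xᵢ² = -a² + xᵢ² ≤ 0`, the only nonzero
`xᵢ` with `i ≥ 1` being `x₁ = a`.
-/

open scoped ENNReal

theorem exists_pos_mul_sub_mul_sq {s t : ℝ} (hs : 0 < s) (ht : 0 < t) :
    ∃ a : ℝ, 0 < t * a - s * a ^ 2 := by
  refine ⟨t / (2 * s), ?_⟩
  have key : t * (t / (2 * s)) - s * (t / (2 * s)) ^ 2 = t ^ 2 / (4 * s) := by
    field_simp
    ring
  rw [key]
  positivity

theorem tsum_mul_pi_single_zero_add_pi_single_one {R : Type*} [NonUnitalNonAssocSemiring R]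
    [TopologicalSpace R] (y : ℕ → R) (b c : R) :
    ∑' i, y i * (Pi.single 0 b + Pi.single 1 c : ℕ → R) i = y 0 * b + y 1 * c := by
  rw [tsum_eq_sum (s := Finset.range 2)]
  · simp [Finset.sum_range_succ]
  · intro i hi
    have h0 : i ≠ 0 := by simp at hi; omega
    have h1 : i ≠ 1 := by simp at hi; omega
    simp [h0, h1]

theorem lp.coeFn_single_add_single {E : Type*} [NormedAddCommGroup E] {p : ℝ≥0∞} (b c : E) :
    ⇑(lp.single p 0 b + lp.single p 1 c : lp (fun _ : ℕ => E) p) =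
      Pi.single 0 b + Pi.single 1 c := by
  rw [lp.coeFn_add, lp.coeFn_single, lp.coeFn_single]

/-- In `X = ℓ²` (paper coordinate `n` is Lean index `n - 1`) with `P = ℓ²₊` and
`K = {x : x₁ + xₙ² ≤ 0 for all n ≥ 2}`, the point `0` is not in `Pos(K, P)`: every
strictly positive functional `y` (a sequence with all coordinates positive) satisfies
`⟨y, x⟩ > 0` for some `x ∈ K`. -/
theorem stmt14 :
    let X := lp (fun _ : ℕ => ℝ) 2
    let K : Set X := {x | ∀ i : ℕ, 1 ≤ i → x 0 + (x i) ^ 2 ≤ 0}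
    ∀ y : X, (∀ i : ℕ, 0 < y i) → ∃ x ∈ K, 0 < ∑' i : ℕ, y i * x i := by
  intro X K y hy
  obtain ⟨a, ha⟩ := exists_pos_mul_sub_mul_sq (hy 0) (hy 1)
  refine ⟨lp.single 2 0 (-(a ^ 2)) + lp.single 2 1 a, fun i hi => ?_, ?_⟩
  · rw [lp.coeFn_single_add_single]
    rcases eq_or_ne i 1 with rfl | h1
    · simp
    · simpa [h1, show i ≠ 0 by omega] using sq_nonneg a
  · rw [lp.coeFn_single_add_single, tsum_mul_pi_single_zero_add_pi_single_one]
    linarith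
end

section
/- Let X = ℓ², P = ℓ²₊, and K = {x ∈ ℓ² : x₁ + xₙ² ≤ 0 for all n ≥ 2}. Define zⁿ ∈ ℓ² by zⁿ₁ = −1/(√2 n), zⁿₖ = 1/(√2 √n) for 2 ≤ k ≤ n+1, and 0 otherwise. Then zⁿ ∈ K, dist(zⁿ, P) → 0 as n → ∞, and ‖zⁿ‖² ≥ 1/2 for all n; consequently 0 is not strictly maximal for (K,P). -/
/-!
The point `zⁿ` is a nonnegative vector with `n` equal coordinates of square sum `1/2`, pushed
into `K` by a first coordinate `-1/(√2 n)` just negative enough to dominate the squares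
`1/(2n)`. Deleting that coordinate lands in `P`, so `dist(zⁿ, P) ≤ 1/(√2 n) → 0`, while
`‖zⁿ‖ ≥ 1/√2`. Hence points of `K` arbitrarily close to `P` stay far from `0`.
-/

open scoped Pointwise ENNReal
open Filter Topology Metric

namespace lp

theorem sum_single_const_apply {ι E : Type*} [DecidableEq ι] [NormedAddCommGroup E]
    {p : ℝ≥0∞} (s : Finset ι) (c : E) (j : ι) :
    (∑ k ∈ s, lp.single p k c : lp (fun _ => E) p) j = if j ∈ s then c else 0 := by
  rw [lp.coeFn_sum, Finset.sum_apply]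
  simp [Pi.single_apply]

theorem sum_norm_sq_le_norm_sq {ι : Type*} {E : ι → Type*} [∀ i, NormedAddCommGroup (E i)]
    (x : lp E 2) (s : Finset ι) : ∑ i ∈ s, ‖x i‖ ^ 2 ≤ ‖x‖ ^ 2 := by
  simpa using lp.sum_rpow_le_norm_rpow (by norm_num) x s

end lp

theorem not_forall_exists_inter_subset_closedBall {X ι : Type*} [SeminormedAddCommGroup X]
    {l : Filter ι} [l.NeBot] {P K : Set X} (hP : P.Nonempty) {z : ι → X}
    (hzK : ∀ᶠ i in l, z i ∈ K) (hdist : Tendsto (fun i => infDist (z i) P) l (𝓝 0)) {c : ℝ}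
    (hc : 0 < c) (hzc : ∀ᶠ i in l, c ≤ ‖z i‖) :
    ¬ ∀ ε > (0 : ℝ), ∃ δ > (0 : ℝ), (P + closedBall (0 : X) δ) ∩ K ⊆ closedBall (0 : X) ε := by
  intro h
  obtain ⟨δ, hδ, hsub⟩ := h (c / 2) (half_pos hc)
  obtain ⟨i, hiK, hid, hic⟩ :=
    (hzK.and ((hdist.eventually (gt_mem_nhds hδ)).and hzc)).exists
  obtain ⟨p, hpP, hp⟩ := (infDist_lt_iff hP).1 hid
  have hzi : z i ∈ P + closedBall 0 δ :=
    ⟨p, hpP, z i - p, by rw [mem_closedBall_zero_iff, ← dist_eq_norm]; exact hp.le,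
      add_sub_cancel _ _⟩
  have := mem_closedBall_zero_iff.1 (hsub ⟨hzi, hiK⟩)
  linarith

local notation "ℓ²" => lp (fun _ : ℕ => ℝ) 2

def nonnegCone : Set ℓ² := {x | ∀ i : ℕ, 0 ≤ x i}

def parabolicSet : Set ℓ² := {x | ∀ i : ℕ, 1 ≤ i → x 0 + (x i) ^ 2 ≤ 0}

noncomputable def testPoint (n : ℕ) : ℓ² :=
  lp.single 2 0 (-(1 / (√2 * n))) + ∑ k ∈ Finset.Icc 1 n, lp.single 2 k (1 / (√2 * √n))

lemma one_div_sqrt_two_mul_sqrt_sq {x : ℝ} (hx : 0 ≤ x) :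
    (1 / (√2 * √x)) ^ 2 = 1 / (2 * x) := by
  rw [div_pow, mul_pow, Real.sq_sqrt zero_le_two, Real.sq_sqrt hx, one_pow]

lemma testPoint_apply_zero (n : ℕ) : testPoint n 0 = -(1 / (√2 * n)) := by
  rw [testPoint, lp.coeFn_add, Pi.add_apply, lp.sum_single_const_apply]
  simp

lemma testPoint_apply_of_ne_zero (n : ℕ) {j : ℕ} (hj : j ≠ 0) :
    testPoint n j = if j ∈ Finset.Icc 1 n then 1 / (√2 * √n) else 0 := by
  rw [testPoint, lp.coeFn_add, Pi.add_apply, lp.sum_single_const_apply,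
    lp.single_apply_ne 2 0 _ hj, zero_add]

lemma testPoint_mem_parabolicSet {n : ℕ} (hn : 1 ≤ n) : testPoint n ∈ parabolicSet := by
  intro i hi
  have hn0 : (0 : ℝ) < n := by exact_mod_cast hn
  rw [testPoint_apply_zero, testPoint_apply_of_ne_zero n (by omega)]
  split_ifs
  · rw [one_div_sqrt_two_mul_sqrt_sq hn0.le, neg_add_nonpos_iff]
    gcongr
    exact Real.sqrt_le_iff.2 ⟨zero_le_two, by norm_num⟩
  · simp

lemma half_le_norm_testPoint_sq {n : ℕ} (hn : 1 ≤ n) : (1 / 2 : ℝ) ≤ ‖testPoint n‖ ^ 2 := by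
  have hn0 : (0 : ℝ) < n := by exact_mod_cast hn
  have hcoord : ∀ i ∈ Finset.Icc 1 n, ‖testPoint n i‖ ^ 2 = 1 / (2 * n) := fun i hi => by
    rw [testPoint_apply_of_ne_zero n (by grind), if_pos hi, Real.norm_eq_abs, sq_abs,
      one_div_sqrt_two_mul_sqrt_sq hn0.le]
  calc (1 / 2 : ℝ) = ∑ i ∈ Finset.Icc 1 n, ‖testPoint n i‖ ^ 2 := by
        rw [Finset.sum_congr rfl hcoord]
        simp only [Finset.sum_const, Nat.card_Icc, add_tsub_cancel_right, nsmul_eq_mul]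
        field_simp
    _ ≤ ‖testPoint n‖ ^ 2 := lp.sum_norm_sq_le_norm_sq _ _

lemma infDist_testPoint_nonnegCone_le (n : ℕ) :
    infDist (testPoint n) nonnegCone ≤ 1 / (√2 * n) := by
  set q : ℓ² := ∑ k ∈ Finset.Icc 1 n, lp.single 2 k (1 / (√2 * √n))
  have hq : q ∈ nonnegCone := fun i => by
    rw [lp.sum_single_const_apply]
    split_ifs <;> positivity
  calc infDist (testPoint n) nonnegCone ≤ dist (testPoint n) q := infDist_le_dist_of_mem hq
    _ = 1 / (√2 * n) := by simp [testPoint, q, dist_eq_norm, lp.norm_single]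

lemma tendsto_infDist_testPoint_nonnegCone :
    Tendsto (fun n => infDist (testPoint n) nonnegCone) atTop (𝓝 0) := by
  have h : Tendsto (fun n : ℕ => 1 / (√2 * n)) atTop (𝓝 0) := by
    simpa [one_div, mul_inv] using
      (tendsto_inv_atTop_nhds_zero_nat (𝕜 := ℝ)).mul_const (√2)⁻¹
  exact squeeze_zero (fun _ => infDist_nonneg) infDist_testPoint_nonnegCone_le h

/-- In `X = ℓ²` (paper coordinate `n` is Lean index `n - 1`) with `P = ℓ²₊` and
`K = {x : x₁ + xₙ² ≤ 0 for all n ≥ 2}`: the points `zⁿ` with first coordinate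
`−1/(√2 n)`, coordinates `2,…,n+1` equal to `1/(√2 √n)` and `0` otherwise, lie in `K`,
satisfy `dist(zⁿ, P) → 0` and `‖zⁿ‖² ≥ 1/2`; consequently `0` is not strictly maximal
for `(K, P)`. -/
theorem stmt15 :
    let X := lp (fun _ : ℕ => ℝ) 2
    let P : Set X := {x | ∀ i : ℕ, 0 ≤ x i}
    let K : Set X := {x | ∀ i : ℕ, 1 ≤ i → x 0 + (x i) ^ 2 ≤ 0}
    let z : ℕ → X := fun n =>
      lp.single 2 0 (-(1 / (Real.sqrt 2 * n))) +
        ∑ k ∈ Finset.Icc 1 n, lp.single 2 k (1 / (Real.sqrt 2 * Real.sqrt n))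
    (∀ n : ℕ, 1 ≤ n → z n ∈ K ∧ (1 / 2 : ℝ) ≤ ‖z n‖ ^ 2) ∧
      Filter.Tendsto (fun n => Metric.infDist (z n) P) Filter.atTop (nhds 0) ∧
      ¬ (∀ ε > (0 : ℝ), ∃ δ > (0 : ℝ),
          (P + Metric.closedBall (0 : X) δ) ∩ K ⊆ Metric.closedBall (0 : X) ε) := by
  intro X P K z
  have hzK : ∀ n, 1 ≤ n → z n ∈ K := fun _ => testPoint_mem_parabolicSet
  have hnorm : ∀ n, 1 ≤ n → √(1 / 2) ≤ ‖z n‖ := fun _ hn =>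
    Real.sqrt_le_iff.2 ⟨norm_nonneg _, half_le_norm_testPoint_sq hn⟩
  refine ⟨fun n hn => ⟨hzK n hn, half_le_norm_testPoint_sq hn⟩,
    tendsto_infDist_testPoint_nonnegCone, ?_⟩
  exact not_forall_exists_inter_subset_closedBall ⟨0, fun _ => le_rfl⟩
    (eventually_atTop.2 ⟨1, hzK⟩) tendsto_infDist_testPoint_nonnegCone (by positivity)
    (eventually_atTop.2 ⟨1, hnorm⟩)
end

section
/- Let X be a Banach space, P a closed convex cone, K a weakly compact convex subset of X, and x̄ ∈ K a P-maximal element of K. Suppose P has a bounded base, i.e. there is f ∈ X* and constants 0 < m with f(p) ≥ m‖p‖ for all p ∈ P. Then x̄ is strictly maximal: for every ε > 0 there exists δ > 0 such that (P + δB_X) ∩ (K − x̄) ⊆ εB_X. -/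
/-!
Translate `x̄` to `0`: then `L = K - x̄` meets `P` only in `0`. If the claim failed for some `ε`,
then for every small `δ` the convex set `(P + δB) ∩ {f ≥ mε/2}` would meet `L`, because the bounded
base forces `f ≥ mε/2` on the points of `P + δB` of norm `> ε`. Closures of convex sets are weakly
closed, so weak compactness of `L` gives a point of `L` in all their closures, that is, a point of
`L ∩ P` with `f ≥ mε/2`, which cannot be `0`.
-/

open scoped Pointwise

open Metric Set

theorem IsCompact.inter_iInter_closure_nonempty_of_convex {E ι : Type*} [AddCommGroup E]
    [Module ℝ E] [TopologicalSpace E] [IsTopologicalAddGroup E] [ContinuousSMul ℝ E]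
    [LocallyConvexSpace ℝ E] [Nonempty ι] {L : Set E} (hL : IsCompact (toWeakSpace ℝ E '' L))
    {C : ι → Set E}
    (hC : ∀ i, Convex ℝ (C i)) (hdir : Directed (· ⊇ ·) C) (hne : ∀ i, (L ∩ C i).Nonempty) :
    (L ∩ ⋂ i, closure (C i)).Nonempty := by
  by_contra hempty
  obtain ⟨i, hi⟩ := hL.elim_directed_family_closed (fun i ↦ toWeakSpace ℝ E '' closure (C i))
    (fun i ↦ (hC i).toWeakSpace_closure ℝ ▸ isClosed_closure)
    (by rw [← image_iInter (toWeakSpace ℝ E).bijective, ← image_inter (toWeakSpace ℝ E).injective,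
          not_nonempty_iff_eq_empty.mp hempty, image_empty])
    (fun i j ↦ (hdir i j).imp fun k hk ↦
      ⟨image_mono (closure_mono hk.1), image_mono (closure_mono hk.2)⟩)
  obtain ⟨y, hyL, hyC⟩ := hne i
  exact hi.subset ⟨mem_image_of_mem _ hyL, mem_image_of_mem _ (subset_closure hyC)⟩

theorem closure_add_closedBall_zero_subset_cthickening {E : Type*} [SeminormedAddCommGroup E]
    (s : Set E) (δ : ℝ) : closure (s + closedBall 0 δ) ⊆ cthickening δ s :=
  closure_minimal (by
    rintro _ ⟨x, hx, b, hb, rfl⟩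
    exact mem_cthickening_of_dist_le _ x δ s hx (by simpa using hb)) isClosed_cthickening

section
variable {X : Type*} [NormedAddCommGroup X] [NormedSpace ℝ X]

theorem ContinuousLinearMap.mul_norm_add_sub_le {f : X →L[ℝ] ℝ} {m : ℝ} (hm : 0 ≤ m) {p : X}
    (hp : m * ‖p‖ ≤ f p) (b : X) : m * ‖p + b‖ - (m + ‖f‖) * ‖b‖ ≤ f (p + b) := by
  have hfb : -(‖f‖ * ‖b‖) ≤ f b :=
    neg_le_of_abs_le ((f.le_opNorm b).trans_eq' (Real.norm_eq_abs _).symm)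
  have := mul_le_mul_of_nonneg_left (norm_add_le p b) hm
  rw [map_add]
  nlinarith

theorem exists_add_closedBall_inter_subset_closedBall {P L : Set X} (hPcl : IsClosed P)
    (hPcv : Convex ℝ P) (hL : IsCompact (toWeakSpace ℝ X '' L)) (hLP : L ∩ P ⊆ {0})
    {f : X →L[ℝ] ℝ} {m : ℝ} (hm : 0 < m) (hf : ∀ p ∈ P, m * ‖p‖ ≤ f p) {ε : ℝ} (hε : 0 < ε) :
    ∃ δ > 0, (P + closedBall 0 δ) ∩ L ⊆ closedBall 0 ε := by
  by_contra! hbig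
  set δ₀ := m * ε / (2 * (m + ‖f‖))
  have hδ₀ : 0 < δ₀ := by positivity
  let C : Ioc 0 δ₀ → Set X := fun δ ↦ (P + closedBall 0 δ) ∩ {y | m * ε / 2 ≤ f y}
  have hC : ∀ δ, (L ∩ C δ).Nonempty := by
    rintro ⟨δ, hδ, hδδ₀⟩
    obtain ⟨_, ⟨⟨p, hp, b, hb, rfl⟩, hL⟩, hε'⟩ := not_subset.mp (hbig δ hδ)
    refine ⟨p + b, hL, ⟨p, hp, b, hb, rfl⟩, ?_⟩
    simp only [mem_closedBall_zero_iff, not_le] at hb hε'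
    have hδ₀_eq : (m + ‖f‖) * δ₀ = m * ε / 2 := by simp only [δ₀]; field_simp
    have : (m + ‖f‖) * ‖b‖ ≤ (m + ‖f‖) * δ₀ := by gcongr; linarith
    have : m * ε ≤ m * ‖p + b‖ := by gcongr
    show m * ε / 2 ≤ f (p + b)
    linarith [f.mul_norm_add_sub_le hm.le (hf p hp) b]
  have : Nonempty (Ioc 0 δ₀) := ⟨⟨δ₀, hδ₀, le_rfl⟩⟩
  obtain ⟨y, hyL, hyC⟩ := hL.inter_iInter_closure_nonempty_of_convex (C := C)
    (fun δ ↦ (hPcv.add (convex_closedBall 0 δ)).inter (convex_halfSpace_ge f.isLinear _))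
    (Monotone.directed_ge fun δ δ' h ↦ inter_subset_inter_left _ <|
      add_subset_add_left (closedBall_subset_closedBall h))
    hC
  rw [mem_iInter] at hyC
  have hyP : y ∈ P := by
    rw [← hPcl.closure_eq, closure_eq_iInter_cthickening' P (Ioc 0 δ₀)
      fun r hr ↦ ⟨min r δ₀, ⟨by positivity, min_le_right _ _⟩, by positivity, min_le_left _ _⟩]
    simp only [mem_iInter]
    exact fun δ hδ ↦ closure_add_closedBall_zero_subset_cthickening P δ <|
      closure_mono inter_subset_left (hyC ⟨δ, hδ⟩)
  have hfy : m * ε / 2 ≤ f y :=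
    closure_minimal inter_subset_right (isClosed_le continuous_const f.continuous)
      (hyC ⟨δ₀, hδ₀, le_rfl⟩)
  rw [hLP ⟨hyL, hyP⟩, map_zero] at hfy
  linarith [mul_pos hm hε]

end

theorem stmt17_general (X : Type*) [NormedAddCommGroup X] [NormedSpace ℝ X]
    (P : Set X) (hPcl : IsClosed P) (hPcv : Convex ℝ P)
    (K : Set X)
    (hKwc : IsCompact (toWeakSpace ℝ X '' K))
    (xbar : X)
    (hmax : K ∩ (({xbar} : Set X) + P) = {xbar})
    (f : X →L[ℝ] ℝ) (m : ℝ) (hm : 0 < m) (hf : ∀ p ∈ P, m * ‖p‖ ≤ f p) :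
    ∀ ε > (0 : ℝ), ∃ δ > (0 : ℝ),
      (P + Metric.closedBall (0 : X) δ) ∩ ((· - xbar) '' K) ⊆
        Metric.closedBall (0 : X) ε := by
  have hL : IsCompact (toWeakSpace ℝ X '' ((· - xbar) '' K)) := by
    simpa only [map_sub, image_image] using
      hKwc.image (continuous_sub_right (toWeakSpace ℝ X xbar))
  have hLP : (· - xbar) '' K ∩ P ⊆ {0} := by
    rintro _ ⟨⟨k, hk, rfl⟩, hkP⟩
    have : k ∈ K ∩ ({xbar} + P) := ⟨hk, xbar, rfl, k - xbar, hkP, add_sub_cancel xbar k⟩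
    rw [hmax, mem_singleton_iff] at this
    simp [this]
  exact fun ε hε ↦ exists_add_closedBall_inter_subset_closedBall hPcl hPcv hL hLP hm hf hε

/-- If `P` is a closed convex cone with a bounded base (there are `f ∈ X*` and `m > 0`
with `f(p) ≥ m‖p‖` on `P`), `K` is a weakly compact convex subset of the Banach space
`X`, and `x̄ ∈ K` is `P`-maximal, then `x̄` is strictly maximal: for every `ε > 0`
there is `δ > 0` with `(P + δB_X) ∩ (K − x̄) ⊆ εB_X`. -/
theorem stmt17 (X : Type*) [NormedAddCommGroup X] [NormedSpace ℝ X] [CompleteSpace X]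
    (P : Set X) (hPcl : IsClosed P) (hPcv : Convex ℝ P)
    (hPcone : ∀ c : ℝ, 0 ≤ c → ∀ p ∈ P, c • p ∈ P)
    (K : Set X) (hKcv : Convex ℝ K)
    (hKwc : IsCompact (toWeakSpace ℝ X '' K))
    (xbar : X) (hx : xbar ∈ K)
    (hmax : K ∩ (({xbar} : Set X) + P) = {xbar})
    (f : X →L[ℝ] ℝ) (m : ℝ) (hm : 0 < m) (hf : ∀ p ∈ P, m * ‖p‖ ≤ f p) :
    ∀ ε > (0 : ℝ), ∃ δ > (0 : ℝ),
      (P + Metric.closedBall (0 : X) δ) ∩ ((· - xbar) '' K) ⊆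
        Metric.closedBall (0 : X) ε :=
  stmt17_general X P hPcl hPcv K hKwc xbar hmax f m hm hf
end
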